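/- arXiv:2107.09377 — 3 statements merged into one kernel-verified Lean document; each statement's English description precedes it below -/
import Mathlib

section
/- Let p ∈ (0,1), θ ∈ (1/2,1), v > 0, and set κ := (p^{p/(1-p)} - p^{1/(1-p)}) θ^{p/(p-1)} (1-θ)^{1/(p-1)} and ε := κ v^{(p+1)/(p-1)}. Define the affine function f̄(z) := (1-θ)θ v² z + (1-θ) v ε for z ≥ 0. Then f̄(z) ≥ z^p for all z ≥ 0. -/
open Real

lemma eq_of_log_eq {x y : ℝ} (hx : 0 < x) (hy : 0 < y) (h : Real.log x = Real.log y) : x = y := by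
  rw [← Real.exp_log hx, ← Real.exp_log hy, h]

/-- Tangent-line bound for the concave function `z ↦ z ^ p`. -/
lemma tangent_rpow {p c : ℝ} (hp0 : 0 < p) (hp1 : p < 1) (hc : 0 < c) {z : ℝ} (hz : 0 ≤ z) :
    z ^ p ≤ (1 - p) * c ^ p + p * c ^ (p - 1) * z := by
  have hs : -1 ≤ z / c - 1 := by
    have : 0 ≤ z / c := div_nonneg hz hc.le
    linarith
  have h := rpow_one_add_le_one_add_mul_self hs hp0.le hp1.le
  have he : 1 + (z / c - 1) = z / c := by ring
  rw [he, Real.div_rpow hz hc.le] at h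
  have hcp : (0 : ℝ) < c ^ p := Real.rpow_pos_of_pos hc p
  have h2 : z ^ p ≤ (1 + p * (z / c - 1)) * c ^ p := by
    rw [← div_le_iff₀ hcp]
    linarith [h]
  calc z ^ p ≤ (1 + p * (z / c - 1)) * c ^ p := h2
    _ = (1 - p) * c ^ p + p * (c ^ p / c) * z := by field_simp; ring
    _ = (1 - p) * c ^ p + p * c ^ (p - 1) * z := by
        rw [← Real.rpow_sub_one hc.ne' p]

/-- With `κ := (p^(p/(1-p)) - p^(1/(1-p))) θ^(p/(p-1)) (1-θ)^(1/(p-1))` and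
`ε := κ v^((p+1)/(p-1))`, the affine function `f̄(z) = (1-θ)θv²z + (1-θ)vε` dominates `z^p`
on `[0,∞)`. -/
theorem stmt_1 (p θ v : ℝ) (hp0 : 0 < p) (hp1 : p < 1) (hθ0 : 1/2 < θ) (hθ1 : θ < 1)
    (hv : 0 < v) :
    ∀ z : ℝ, 0 ≤ z →
      z ^ p ≤ (1 - θ) * θ * v ^ 2 * z +
        (1 - θ) * v *
          ((p ^ (p / (1 - p)) - p ^ (1 / (1 - p))) * θ ^ (p / (p - 1)) *
              (1 - θ) ^ (1 / (p - 1)) * v ^ ((p + 1) / (p - 1))) := by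
  intro z hz
  have hθ0' : 0 < θ := by linarith
  have hθ1' : 0 < 1 - θ := by linarith
  have hp1' : 0 < 1 - p := by linarith
  have hp1'' : p - 1 ≠ 0 := by linarith
  set a : ℝ := (1 - θ) * θ * v ^ 2 with ha_def
  have ha : 0 < a := by positivity
  set c : ℝ := p ^ (1 / (1 - p)) * a ^ (1 / (p - 1)) with hc_def
  have hc : 0 < c := by positivity
  have key := tangent_rpow hp0 hp1 hc hz
  have hlogc : Real.log c = Real.log p * (1 / (1 - p)) + Real.log a * (1 / (p - 1)) := by
    rw [hc_def, Real.log_mul (by positivity) (by positivity), Real.log_rpow hp0,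
      Real.log_rpow ha]
    ring
  have hla : Real.log a = Real.log (1 - θ) + Real.log θ + 2 * Real.log v := by
    rw [ha_def, Real.log_mul (by positivity) (by positivity),
      Real.log_mul (by positivity) (by positivity), Real.log_pow]
    push_cast; ring
  have hA : p * c ^ (p - 1) = a := by
    apply eq_of_log_eq (by positivity) ha
    rw [Real.log_mul (by positivity) (by positivity), Real.log_rpow hc, hlogc]
    field_simp
    ring
  have hdiff : p ^ (p / (1 - p)) - p ^ (1 / (1 - p)) = p ^ (p / (1 - p)) * (1 - p) := by
    have h1 : (1 : ℝ) / (1 - p) = p / (1 - p) + 1 := by field_simp; ring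
    rw [h1, Real.rpow_add hp0, Real.rpow_one]
    ring
  have hB : (1 - θ) * v *
        ((p ^ (p / (1 - p)) - p ^ (1 / (1 - p))) * θ ^ (p / (p - 1)) *
            (1 - θ) ^ (1 / (p - 1)) * v ^ ((p + 1) / (p - 1))) = (1 - p) * c ^ p := by
    rw [hdiff]
    apply eq_of_log_eq (by positivity) (by positivity)
    rw [Real.log_mul (by positivity) (by positivity),
      Real.log_mul (by positivity) (by positivity),
      Real.log_mul (by positivity) (by positivity),
      Real.log_mul (by positivity) (by positivity),
      Real.log_mul (by positivity) (by positivity),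
      Real.log_mul (by positivity) (by positivity),
      Real.log_mul (by positivity) (by positivity),
      Real.log_rpow hp0, Real.log_rpow hθ0', Real.log_rpow hθ1', Real.log_rpow hv,
      Real.log_rpow hc, hlogc, hla]
    field_simp
    ring
  rw [hA] at key
  calc z ^ p ≤ (1 - p) * c ^ p + a * z := key
    _ = a * z + (1 - θ) * v *
        ((p ^ (p / (1 - p)) - p ^ (1 / (1 - p))) * θ ^ (p / (p - 1)) *
            (1 - θ) ^ (1 / (p - 1)) * v ^ ((p + 1) / (p - 1))) := by rw [hB]; ring
end

section
/- Fix ṽ > 0 and let G(s,y;t,x) be the heat kernel. For t ∈ [0, ṽ^{−2}] and x, x' ∈ [−2ṽ^{−1}, 2ṽ^{−1}] with z := x' − x ≥ 0, one has ∬_0^∞ (G(s,y;t,x') − G(s,y;t,x))² e^{−ṽ y} ds dy ≤ 2^6 |x' − x|. -/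
open MeasureTheory

/-- The heat kernel of `∂_x²` on `ℝ`. -/
noncomputable def heatKernel (s y t x : ℝ) : ℝ :=
  if s < t then Real.exp (-(x - y) ^ 2 / (4 * (t - s))) / Real.sqrt (4 * Real.pi * (t - s))
  else 0

open Set Real

lemma gauss_integrable {b : ℝ} (hb : 0 < b) (c d e : ℝ) :
    Integrable (fun y : ℝ => Real.exp (-(b * (y - c) ^ 2) - d * y + e)) := by
  have key : ∀ y : ℝ, -(b * (y - c) ^ 2) - d * y + e
      = -b * (y - (c - d / (2 * b))) ^ 2 + (e - d * c + d ^ 2 / (4 * b)) := by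
    intro y; field_simp; ring
  simp_rw [key, Real.exp_add]
  exact ((integrable_exp_neg_mul_sq hb).comp_sub_right (c - d / (2 * b))).mul_const _

lemma gauss_int {b : ℝ} (hb : 0 < b) (c d e : ℝ) :
    ∫ y : ℝ, Real.exp (-(b * (y - c) ^ 2) - d * y + e)
      = Real.sqrt (Real.pi / b) * Real.exp (d ^ 2 / (4 * b) - d * c + e) := by
  have key : ∀ y : ℝ, -(b * (y - c) ^ 2) - d * y + e
      = -b * (y - (c - d / (2 * b))) ^ 2 + (e - d * c + d ^ 2 / (4 * b)) := by
    intro y; field_simp; ring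
  simp_rw [key, Real.exp_add]
  rw [integral_mul_const]
  rw [integral_sub_right_eq_self (fun y : ℝ => Real.exp (-b * y ^ 2)) (c - d / (2 * b))]
  rw [integral_gaussian]
  rw [← Real.exp_add, ← Real.exp_add]; ring_nf

lemma exp_sq_expand (P Q R : ℝ) : (Real.exp P - Real.exp Q) ^ 2 * Real.exp R
    = Real.exp (P + P + R) - 2 * Real.exp (P + Q + R) + Real.exp (Q + Q + R) := by
  simp only [Real.exp_add]; ring

lemma inner_eq {V t x x' s : ℝ} (hs : s < t) :
    (∫ y : ℝ, (heatKernel s y t x' - heatKernel s y t x) ^ 2 * Real.exp (-(V * y)))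
      = Real.sqrt (2 * Real.pi * (t - s)) / (4 * Real.pi * (t - s)) *
        (Real.exp (V ^ 2 * (t - s) / 2 - V * x')
          - 2 * Real.exp (V ^ 2 * (t - s) / 2 - V * ((x + x') / 2)
              - (x' - x) ^ 2 / (8 * (t - s)))
          + Real.exp (V ^ 2 * (t - s) / 2 - V * x)) := by
  have hτ : 0 < t - s := sub_pos.mpr hs
  have hτ' : t - s ≠ 0 := ne_of_gt hτ
  have hb : (0:ℝ) < 1 / (2 * (t - s)) := by positivity
  have hκ : Real.sqrt (4 * Real.pi * (t - s)) ^ 2 = 4 * Real.pi * (t - s) :=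
    Real.sq_sqrt (by positivity)
  have hpt : ∀ y : ℝ,
      (heatKernel s y t x' - heatKernel s y t x) ^ 2 * Real.exp (-(V * y))
        = (1 / (4 * Real.pi * (t - s))) *
          (Real.exp (-(1 / (2 * (t - s)) * (y - x') ^ 2) - V * y + 0)
            - 2 * Real.exp (-(1 / (2 * (t - s)) * (y - (x + x') / 2) ^ 2) - V * y
                + (-((x' - x) ^ 2 / (8 * (t - s)))))
            + Real.exp (-(1 / (2 * (t - s)) * (y - x) ^ 2) - V * y + 0)) := by
    intro y
    simp only [heatKernel, if_pos hs]
    rw [div_sub_div_same, div_pow, hκ, div_mul_eq_mul_div, exp_sq_expand]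
    rw [show -(x' - y) ^ 2 / (4 * (t - s)) + -(x' - y) ^ 2 / (4 * (t - s)) + -(V * y)
        = -(1 / (2 * (t - s)) * (y - x') ^ 2) - V * y + 0 by field_simp; ring]
    rw [show -(x' - y) ^ 2 / (4 * (t - s)) + -(x - y) ^ 2 / (4 * (t - s)) + -(V * y)
        = -(1 / (2 * (t - s)) * (y - (x + x') / 2) ^ 2) - V * y
          + (-((x' - x) ^ 2 / (8 * (t - s)))) by field_simp; ring]
    rw [show -(x - y) ^ 2 / (4 * (t - s)) + -(x - y) ^ 2 / (4 * (t - s)) + -(V * y)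
        = -(1 / (2 * (t - s)) * (y - x) ^ 2) - V * y + 0 by field_simp; ring]
    ring
  rw [integral_congr_ae (Filter.Eventually.of_forall hpt)]
  rw [integral_const_mul]
  have h1 := gauss_integrable hb x' V 0
  have h2 := gauss_integrable hb ((x + x') / 2) V (-((x' - x) ^ 2 / (8 * (t - s))))
  have h3 := gauss_integrable hb x V 0
  have h12 : Integrable (fun y : ℝ =>
      Real.exp (-(1 / (2 * (t - s)) * (y - x') ^ 2) - V * y + 0)
        - 2 * Real.exp (-(1 / (2 * (t - s)) * (y - (x + x') / 2) ^ 2) - V * y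
            + (-((x' - x) ^ 2 / (8 * (t - s)))))) := h1.sub (h2.const_mul 2)
  rw [integral_add h12 h3, integral_sub h1 (h2.const_mul 2),
    integral_const_mul, gauss_int hb x' V 0,
    gauss_int hb ((x + x') / 2) V (-((x' - x) ^ 2 / (8 * (t - s)))), gauss_int hb x V 0]
  rw [show Real.pi / (1 / (2 * (t - s))) = 2 * Real.pi * (t - s) by field_simp]
  rw [show V ^ 2 / (4 * (1 / (2 * (t - s)))) = V ^ 2 * (t - s) / 2 by field_simp; ring]
  rw [show V ^ 2 * (t - s) / 2 - V * x' + 0 = V ^ 2 * (t - s) / 2 - V * x' by ring,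
    show V ^ 2 * (t - s) / 2 - V * ((x + x') / 2) + -((x' - x) ^ 2 / (8 * (t - s)))
      = V ^ 2 * (t - s) / 2 - V * ((x + x') / 2) - (x' - x) ^ 2 / (8 * (t - s)) by ring,
    show V ^ 2 * (t - s) / 2 - V * x + 0 = V ^ 2 * (t - s) / 2 - V * x by ring]
  ring


lemma exp_half_le : Real.exp ((1:ℝ)/2) ≤ 5/3 := by
  have h5 : Real.exp ((1:ℝ)/2) * Real.exp ((1:ℝ)/2) = Real.exp 1 := by
    rw [← Real.exp_add]; norm_num
  nlinarith [Real.exp_pos ((1:ℝ)/2), Real.exp_one_lt_d9]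

lemma exp_two_le : Real.exp (2:ℝ) ≤ 15/2 := by
  have h5 : Real.exp (2:ℝ) = Real.exp 1 * Real.exp 1 := by
    rw [← Real.exp_add]; norm_num
  nlinarith [Real.exp_pos (1:ℝ), Real.exp_one_lt_d9]

lemma rpow_neg_half_eq {τ : ℝ} (hτ : 0 < τ) : τ ^ (-(1/2) : ℝ) = 1 / Real.sqrt τ := by
  rw [Real.rpow_neg hτ.le, ← Real.sqrt_eq_rpow, one_div]

lemma rpow_neg_threehalf_eq {τ : ℝ} (hτ : 0 < τ) :
    τ ^ (-(3/2) : ℝ) = 1 / (τ * Real.sqrt τ) := by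
  rw [show (-(3/2) : ℝ) = (-1) + (-(1/2)) by norm_num, Real.rpow_add hτ,
    Real.rpow_neg_one, rpow_neg_half_eq hτ]
  field_simp

lemma sqrt_two_pi_le : Real.sqrt (2 * Real.pi) ≤ Real.pi := by
  calc Real.sqrt (2 * Real.pi) ≤ Real.sqrt (Real.pi ^ 2) :=
        Real.sqrt_le_sqrt (by nlinarith [Real.pi_gt_three])
    _ = Real.pi := Real.sqrt_sq Real.pi_pos.le

lemma final_alg (V z T M : ℝ) (hT0 : 0 ≤ T) (hM0 : 0 ≤ M) :
    1 / 4 * T * (5 / 3 * (15 / 2 * (V * z / 2) ^ 2 + 15 * M))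
      ≤ 2 * V ^ 2 * z ^ 2 * T + 7 * (T * M) := by
  nlinarith [mul_nonneg hT0 (mul_nonneg (sq_nonneg V) (sq_nonneg z)),
    mul_nonneg hT0 hM0]

set_option maxHeartbeats 1000000 in
lemma inner_le {V t x x' s : ℝ} (hV : 0 < V) (htV : t ≤ 1 / V ^ 2) (hs : s < t)
    (hs0 : 0 ≤ s) (hx1 : -(2 / V) ≤ x) (hx'1 : -(2 / V) ≤ x') (hzz : 0 ≤ x' - x) :
    (∫ y : ℝ, (heatKernel s y t x' - heatKernel s y t x) ^ 2 * Real.exp (-(V * y)))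
      ≤ 2 * V ^ 2 * (x' - x) ^ 2 * (t - s) ^ (-(1/2) : ℝ)
        + 7 * min ((t - s) ^ (-(1/2) : ℝ)) ((x' - x) ^ 2 / 8 * (t - s) ^ (-(3/2) : ℝ)) := by
  have hτ0 : 0 < t - s := sub_pos.mpr hs
  have hτV0 : V ^ 2 * (t - s) ≤ 1 := by
    have h1 : t - s ≤ 1 / V ^ 2 := by linarith
    have := (le_div_iff₀ (by positivity : (0:ℝ) < V ^ 2)).mp h1
    linarith
  have hVx : -2 ≤ V * x := by
    have h := mul_le_mul_of_nonneg_left hx1 hV.le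
    have h2 : V * (-(2 / V)) = -2 := by field_simp
    linarith
  have hVx' : -2 ≤ V * x' := by
    have h := mul_le_mul_of_nonneg_left hx'1 hV.le
    have h2 : V * (-(2 / V)) = -2 := by field_simp
    linarith
  rw [inner_eq hs]
  set τ := t - s with hτdef
  set z := x' - x with hzdef
  clear_value τ z
  clear hτ0 hτV0
  have hτ : 0 < τ := by rw [hτdef]; exact sub_pos.mpr hs
  have hτV : V ^ 2 * τ ≤ 1 := by
    rw [hτdef]
    have h1 : t - s ≤ 1 / V ^ 2 := by linarith
    have := (le_div_iff₀ (by positivity : (0:ℝ) < V ^ 2)).mp h1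
    linarith
  have e1 : Real.exp (V ^ 2 * τ / 2 - V * x')
      = Real.exp (V ^ 2 * τ / 2) * (Real.exp (-(V * x') / 2) * Real.exp (-(V * x') / 2)) := by
    rw [← Real.exp_add, ← Real.exp_add]; congr 1; ring
  have e2 : Real.exp (V ^ 2 * τ / 2 - V * ((x + x') / 2) - z ^ 2 / (8 * τ))
      = Real.exp (V ^ 2 * τ / 2) * (Real.exp (-(V * x) / 2) * Real.exp (-(V * x') / 2)
          * Real.exp (-(z ^ 2 / (8 * τ)))) := by
    rw [← Real.exp_add, ← Real.exp_add, ← Real.exp_add]; congr 1; ring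
  have e3 : Real.exp (V ^ 2 * τ / 2 - V * x)
      = Real.exp (V ^ 2 * τ / 2) * (Real.exp (-(V * x) / 2) * Real.exp (-(V * x) / 2)) := by
    rw [← Real.exp_add, ← Real.exp_add]; congr 1; ring
  rw [e1, e2, e3]
  clear e1 e2 e3
  -- facts about the exponential atoms
  have hq : Real.exp (-(V * x') / 2) = Real.exp (-(V * x) / 2) * Real.exp (-(V * z) / 2) := by
    rw [← Real.exp_add]; congr 1; rw [hzdef]; ring
  have ha : Real.exp (V ^ 2 * τ / 2) ≤ 5 / 3 :=
    le_trans (Real.exp_le_exp.mpr (by linarith)) exp_half_le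
  have hpp : Real.exp (-(V * x) / 2) * Real.exp (-(V * x) / 2) ≤ 15 / 2 := by
    rw [← Real.exp_add]
    exact le_trans (Real.exp_le_exp.mpr (by linarith)) exp_two_le
  have hpq : Real.exp (-(V * x) / 2) * Real.exp (-(V * x') / 2) ≤ 15 / 2 := by
    rw [← Real.exp_add]
    exact le_trans (Real.exp_le_exp.mpr (by linarith)) exp_two_le
  have hVz : 0 ≤ V * z := mul_nonneg hV.le (hzdef ▸ hzz)
  have hw0 : Real.exp (-(V * z) / 2) ≤ 1 := Real.exp_le_one_iff.mpr (by linarith)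
  have hw1 : 1 - Real.exp (-(V * z) / 2) ≤ V * z / 2 := by
    linarith [Real.add_one_le_exp (-(V * z) / 2)]
  have hqp : (Real.exp (-(V * x') / 2) - Real.exp (-(V * x) / 2)) ^ 2
      ≤ 15 / 2 * (V * z / 2) ^ 2 := by
    rw [hq]
    have h1 : (Real.exp (-(V * x) / 2) * Real.exp (-(V * z) / 2) - Real.exp (-(V * x) / 2)) ^ 2
        = Real.exp (-(V * x) / 2) * Real.exp (-(V * x) / 2)
          * (1 - Real.exp (-(V * z) / 2)) ^ 2 := by ring
    rw [h1]
    have h2 : (1 - Real.exp (-(V * z) / 2)) ^ 2 ≤ (V * z / 2) ^ 2 :=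
      sq_le_sq' (by linarith) hw1
    exact mul_le_mul hpp h2 (sq_nonneg _) (by norm_num)
  have hM0 : 0 ≤ min 1 (z ^ 2 / (8 * τ)) :=
    le_min (by norm_num) (div_nonneg (sq_nonneg z) (by linarith))
  have h1r : 1 - Real.exp (-(z ^ 2 / (8 * τ))) ≤ min 1 (z ^ 2 / (8 * τ)) := by
    refine le_min (by linarith [Real.exp_pos (-(z ^ 2 / (8 * τ)))]) ?_
    linarith [Real.add_one_le_exp (-(z ^ 2 / (8 * τ)))]
  have hr1 : Real.exp (-(z ^ 2 / (8 * τ))) ≤ 1 :=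
    Real.exp_le_one_iff.mpr (neg_nonpos.mpr (div_nonneg (sq_nonneg z) (by linarith)))
  -- factor bound
  have hsq : Real.sqrt τ * Real.sqrt τ = τ := Real.mul_self_sqrt hτ.le
  have hsqpos : 0 < Real.sqrt τ := Real.sqrt_pos.mpr hτ
  have h2pi : Real.sqrt (2 * Real.pi) ≤ Real.pi := sqrt_two_pi_le
  have hkey : Real.sqrt (2 * Real.pi * τ) ≤ Real.pi * Real.sqrt τ := by
    rw [Real.sqrt_mul (by positivity : (0:ℝ) ≤ 2 * Real.pi)]
    exact mul_le_mul_of_nonneg_right h2pi (Real.sqrt_nonneg τ)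
  have hfac : Real.sqrt (2 * Real.pi * τ) / (4 * Real.pi * τ)
      ≤ 1 / 4 * (τ ^ (-(1/2) : ℝ)) := by
    rw [rpow_neg_half_eq hτ, div_le_iff₀ (by positivity : (0:ℝ) < 4 * Real.pi * τ)]
    have hR : 1 / 4 * (1 / Real.sqrt τ) * (4 * Real.pi * τ) = Real.pi * Real.sqrt τ := by
      calc 1 / 4 * (1 / Real.sqrt τ) * (4 * Real.pi * τ) = Real.pi * (τ / Real.sqrt τ) := by ring
        _ = Real.pi * Real.sqrt τ := by rw [Real.div_sqrt]
    rw [hR]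
    exact hkey
  have hmin : min (τ ^ (-(1/2) : ℝ)) (z ^ 2 / 8 * τ ^ (-(3/2) : ℝ))
      = τ ^ (-(1/2) : ℝ) * min 1 (z ^ 2 / (8 * τ)) := by
    rw [mul_min_of_nonneg _ _ (by positivity : (0:ℝ) ≤ τ ^ (-(1/2) : ℝ)), mul_one]
    congr 1
    rw [rpow_neg_half_eq hτ, rpow_neg_threehalf_eq hτ]
    field_simp
  rw [hmin]
  have hT0 : 0 ≤ τ ^ (-(1/2) : ℝ) := Real.rpow_nonneg hτ.le _
  -- now generalize all atoms
  generalize hag : Real.exp (V ^ 2 * τ / 2) = a at *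
  generalize hpg : Real.exp (-(V * x) / 2) = p at *
  generalize hqg : Real.exp (-(V * x') / 2) = q at *
  generalize hrg : Real.exp (-(z ^ 2 / (8 * τ))) = r at *
  generalize hTg : (τ : ℝ) ^ (-(1/2) : ℝ) = T at *
  generalize hMg : min 1 (z ^ 2 / (8 * τ)) = M at *
  generalize hFg : Real.sqrt (2 * Real.pi * τ) / (4 * Real.pi * τ) = fac at *
  have ha0 : 0 < a := hag ▸ Real.exp_pos _
  have hp0 : 0 < p := hpg ▸ Real.exp_pos _
  have hq0 : 0 < q := hqg ▸ Real.exp_pos _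
  have hr0 : 0 < r := hrg ▸ Real.exp_pos _
  have hfac0 : 0 ≤ fac := by
    rw [← hFg]; positivity
  have hbr : a * (q * q) - 2 * (a * (p * q * r)) + a * (p * p)
      = a * ((q - p) ^ 2 + 2 * (p * q) * (1 - r)) := by ring
  have hW0 : 0 ≤ (q - p) ^ 2 + 2 * (p * q) * (1 - r) :=
    add_nonneg (sq_nonneg _) (mul_nonneg (mul_nonneg (by norm_num)
      (mul_nonneg hp0.le hq0.le)) (by linarith))
  have hWb : (q - p) ^ 2 + 2 * (p * q) * (1 - r)
      ≤ 15 / 2 * (V * z / 2) ^ 2 + 15 * M := by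
    have h1 : p * q * (1 - r) ≤ 15 / 2 * M :=
      mul_le_mul hpq h1r (by linarith) (by norm_num)
    linarith [hqp, h1]
  have haW : a * ((q - p) ^ 2 + 2 * (p * q) * (1 - r))
      ≤ 5 / 3 * (15 / 2 * (V * z / 2) ^ 2 + 15 * M) :=
    mul_le_mul ha hWb hW0 (by norm_num)
  calc fac * (a * (q * q) - 2 * (a * (p * q * r)) + a * (p * p))
      = fac * (a * ((q - p) ^ 2 + 2 * (p * q) * (1 - r))) := by rw [hbr]
    _ ≤ 1 / 4 * T * (5 / 3 * (15 / 2 * (V * z / 2) ^ 2 + 15 * M)) :=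
        mul_le_mul hfac haW (mul_nonneg ha0.le hW0) (by positivity)
    _ ≤ 2 * V ^ 2 * z ^ 2 * T + 7 * (T * M) := final_alg V z T M hT0 hM0

lemma min_eq_low {k τ : ℝ} (h0 : 0 < τ) (hk : τ ≤ k) :
    min (τ ^ (-(1/2) : ℝ)) (k * τ ^ (-(3/2) : ℝ)) = τ ^ (-(1/2) : ℝ) := by
  refine min_eq_left ?_
  have h1 : τ ^ (-(1/2) : ℝ) = τ * τ ^ (-(3/2) : ℝ) := by
    rw [show (-(1/2) : ℝ) = 1 + -(3/2) by norm_num, Real.rpow_add h0, Real.rpow_one]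
  rw [h1]
  exact mul_le_mul_of_nonneg_right hk (Real.rpow_nonneg h0.le _)

lemma min_eq_high {k τ : ℝ} (h0 : 0 < k) (hk : k ≤ τ) :
    min (τ ^ (-(1/2) : ℝ)) (k * τ ^ (-(3/2) : ℝ)) = k * τ ^ (-(3/2) : ℝ) := by
  have hτ : 0 < τ := lt_of_lt_of_le h0 hk
  refine min_eq_right ?_
  have h1 : τ ^ (-(1/2) : ℝ) = τ * τ ^ (-(3/2) : ℝ) := by
    rw [show (-(1/2) : ℝ) = 1 + -(3/2) by norm_num, Real.rpow_add hτ, Real.rpow_one]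
  rw [h1]
  exact mul_le_mul_of_nonneg_right hk (Real.rpow_nonneg hτ.le _)

lemma int_Ioc_rpow_neg_half {b : ℝ} (hb : 0 ≤ b) :
    ∫ τ in Ioc (0:ℝ) b, τ ^ (-(1/2) : ℝ) = 2 * Real.sqrt b := by
  rw [← intervalIntegral.integral_of_le hb, integral_rpow (Or.inl (by norm_num)),
    show (-(1/2) + 1 : ℝ) = 1/2 by norm_num, Real.zero_rpow (by norm_num : (1/2 : ℝ) ≠ 0),
    Real.sqrt_eq_rpow]
  ring

lemma min_integrableOn {k : ℝ} (hk : 0 < k) :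
    IntegrableOn (fun τ : ℝ => min (τ ^ (-(1/2) : ℝ)) (k * τ ^ (-(3/2) : ℝ))) (Ioi 0) := by
  rw [← Ioc_union_Ioi_eq_Ioi hk.le]
  refine IntegrableOn.union ?_ ?_
  · refine IntegrableOn.congr_fun
      ((intervalIntegral.intervalIntegrable_rpow' (by norm_num : (-1:ℝ) < -(1/2))).1) ?_
      measurableSet_Ioc
    intro τ hτ
    exact (min_eq_low hτ.1 hτ.2).symm
  · refine IntegrableOn.congr_fun
      ((integrableOn_Ioi_rpow_of_lt (by norm_num : (-(3/2):ℝ) < -1) hk).const_mul k) ?_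
      measurableSet_Ioi
    intro τ hτ
    exact (min_eq_high hk (le_of_lt hτ)).symm

lemma min_integral {k : ℝ} (hk : 0 < k) :
    ∫ τ in Ioi (0:ℝ), min (τ ^ (-(1/2) : ℝ)) (k * τ ^ (-(3/2) : ℝ)) = 4 * Real.sqrt k := by
  have hA : IntegrableOn (fun τ : ℝ => min (τ ^ (-(1/2) : ℝ)) (k * τ ^ (-(3/2) : ℝ)))
      (Ioc 0 k) := (min_integrableOn hk).mono_set Ioc_subset_Ioi_self
  have hB : IntegrableOn (fun τ : ℝ => min (τ ^ (-(1/2) : ℝ)) (k * τ ^ (-(3/2) : ℝ)))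
      (Ioi k) := (min_integrableOn hk).mono_set (Ioi_subset_Ioi hk.le)
  rw [← Ioc_union_Ioi_eq_Ioi hk.le,
    setIntegral_union Ioc_disjoint_Ioi_same measurableSet_Ioi hA hB]
  have h1 : ∫ τ in Ioc (0:ℝ) k, min (τ ^ (-(1/2) : ℝ)) (k * τ ^ (-(3/2) : ℝ))
      = ∫ τ in Ioc (0:ℝ) k, τ ^ (-(1/2) : ℝ) :=
    setIntegral_congr_fun measurableSet_Ioc fun τ hτ => min_eq_low hτ.1 hτ.2
  have h2 : ∫ τ in Ioi k, min (τ ^ (-(1/2) : ℝ)) (k * τ ^ (-(3/2) : ℝ))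
      = ∫ τ in Ioi k, k * τ ^ (-(3/2) : ℝ) :=
    setIntegral_congr_fun measurableSet_Ioi fun τ hτ => min_eq_high hk (le_of_lt hτ)
  rw [h1, h2, int_Ioc_rpow_neg_half hk.le, integral_const_mul,
    integral_Ioi_rpow_of_lt (by norm_num : (-(3/2):ℝ) < -1) hk,
    show (-(3/2) + 1 : ℝ) = -(1/2) by norm_num, rpow_neg_half_eq hk]
  have hsk : 0 < Real.sqrt k := Real.sqrt_pos.mpr hk
  field_simp
  linear_combination (-2 : ℝ) * Real.sq_sqrt hk.le

set_option maxHeartbeats 1000000 in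
/-- spatial increment estimate for the heat kernel: for `ṽ > 0`,
`t ∈ [0, ṽ⁻²]` and `x ≤ x'` in `[−2ṽ⁻¹, 2ṽ⁻¹]`,
`∬_0^∞ (G(s,y;t,x') − G(s,y;t,x))² e^{−ṽy} ds dy ≤ 2^6 |x'−x|`. -/
theorem stmt_10 (V t x x' : ℝ) (hV : 0 < V)
    (ht : t ∈ Set.Icc 0 (1 / V ^ 2))
    (hx : x ∈ Set.Icc (-(2 / V)) (2 / V)) (hx' : x' ∈ Set.Icc (-(2 / V)) (2 / V))
    (hz : 0 ≤ x' - x) :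
    (∫ s in Set.Ioi (0:ℝ), ∫ y : ℝ,
        (heatKernel s y t x' - heatKernel s y t x) ^ 2 * Real.exp (-(V * y))) ≤
      2 ^ 6 * |x' - x| := by
  obtain ⟨ht0, htV⟩ := ht
  obtain ⟨hx1, hx2⟩ := hx
  obtain ⟨hx'1, hx'2⟩ := hx'
  rw [abs_of_nonneg hz]
  rcases eq_or_lt_of_le ht0 with ht0' | ht0'
  · -- t = 0 : everything vanishes
    have hzero : EqOn (fun s : ℝ => ∫ y : ℝ,
        (heatKernel s y t x' - heatKernel s y t x) ^ 2 * Real.exp (-(V * y)))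
        (fun _ => (0:ℝ)) (Ioi 0) := by
      intro s hs
      have hns : ¬ s < t := by rw [← ht0']; exact not_lt.mpr (le_of_lt hs)
      simp [heatKernel, if_neg hns]
    rw [setIntegral_congr_fun measurableSet_Ioi hzero]
    simp only [integral_zero]
    positivity
  rcases eq_or_lt_of_le hz with hz0 | hz0
  · -- x' = x
    have hxx : x' = x := by linarith
    subst hxx
    simp
  -- main case : 0 < t and 0 < x' - x
  have hk0 : 0 < (x' - x) ^ 2 / 8 := by positivity
  -- the dominating function
  set G : ℝ → ℝ := fun s => if s < t then
      2 * V ^ 2 * (x' - x) ^ 2 * (t - s) ^ (-(1/2) : ℝ)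
        + 7 * min ((t - s) ^ (-(1/2) : ℝ)) ((x' - x) ^ 2 / 8 * (t - s) ^ (-(3/2) : ℝ))
    else 0 with hGdef
  set g : ℝ → ℝ := fun τ =>
      2 * V ^ 2 * (x' - x) ^ 2 * τ ^ (-(1/2) : ℝ)
        + 7 * min (τ ^ (-(1/2) : ℝ)) ((x' - x) ^ 2 / 8 * τ ^ (-(3/2) : ℝ)) with hgdef
  have hgInt : IntegrableOn g (Ioc 0 t) := by
    refine Integrable.add ?_ ?_
    · exact ((intervalIntegral.intervalIntegrable_rpow'
        (by norm_num : (-1:ℝ) < -(1/2))).1).const_mul _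
    · exact ((min_integrableOn hk0).mono_set Ioc_subset_Ioi_self).const_mul 7
  have hgt : IntervalIntegrable g volume 0 t :=
    (intervalIntegrable_iff_integrableOn_Ioc_of_le ht0'.le).mpr hgInt
  have hGt : IntegrableOn (fun s => g (t - s)) (Ioc 0 t) := by
    refine (intervalIntegrable_iff_integrableOn_Ioc_of_le ht0'.le).mp ?_
    simpa using (hgt.comp_sub_left t).symm
  have hGIoo : IntegrableOn G (Ioo 0 t) := by
    refine IntegrableOn.congr_fun (hGt.mono_set Ioo_subset_Ioc_self) ?_ measurableSet_Ioo
    intro s hs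
    simp only [hGdef, hgdef, if_pos hs.2]
  have hGIci : IntegrableOn G (Ici t) := by
    refine IntegrableOn.congr_fun integrableOn_zero ?_ measurableSet_Ici
    intro s hs
    simp only [hGdef, if_neg (not_lt.mpr (show t ≤ s from hs))]
  have hGint : IntegrableOn G (Ioi 0) := by
    rw [← Ioo_union_Ici_eq_Ioi ht0']
    exact hGIoo.union hGIci
  have hFG : ∀ s ∈ Ioi (0:ℝ),
      (∫ y : ℝ, (heatKernel s y t x' - heatKernel s y t x) ^ 2 * Real.exp (-(V * y))) ≤ G s := by
    intro s hs
    simp only [hGdef]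
    by_cases hst : s < t
    · rw [if_pos hst]
      exact inner_le hV htV hst (le_of_lt hs) hx1 hx'1 hz
    · rw [if_neg hst]
      have hzero : ∀ y : ℝ,
          (heatKernel s y t x' - heatKernel s y t x) ^ 2 * Real.exp (-(V * y)) = 0 := by
        intro y; simp [heatKernel, if_neg hst]
      rw [integral_congr_ae (Filter.Eventually.of_forall hzero), integral_zero]
  have step1 : (∫ s in Ioi (0:ℝ), ∫ y : ℝ,
      (heatKernel s y t x' - heatKernel s y t x) ^ 2 * Real.exp (-(V * y)))
      ≤ ∫ s in Ioi (0:ℝ), G s := by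
    refine integral_mono_of_nonneg ?_ hGint ?_
    · exact Filter.Eventually.of_forall fun s =>
        integral_nonneg fun y => mul_nonneg (sq_nonneg _) (Real.exp_pos _).le
    · exact ae_restrict_of_forall_mem measurableSet_Ioi hFG
  refine le_trans step1 ?_
  -- evaluate the integral of G
  have hsplit : ∫ s in Ioi (0:ℝ), G s = ∫ τ in Ioc (0:ℝ) t, g τ := by
    rw [← Ioo_union_Ici_eq_Ioi ht0',
      setIntegral_union ((Iio_disjoint_Ici le_rfl).mono_left Ioo_subset_Iio_self)
        measurableSet_Ici hGIoo hGIci]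
    have h0 : ∫ s in Ici t, G s = 0 := by
      rw [setIntegral_congr_fun measurableSet_Ici
        (fun s hs => by simp only [hGdef, if_neg (not_lt.mpr (show t ≤ s from hs))] :
          EqOn G (fun _ => (0:ℝ)) (Ici t))]
      simp
    have h1 : ∫ s in Ioo (0:ℝ) t, G s = ∫ s in Ioo (0:ℝ) t, g (t - s) :=
      setIntegral_congr_fun measurableSet_Ioo fun s hs => by
        simp only [hGdef, hgdef, if_pos hs.2]
    rw [h0, add_zero, h1, ← integral_Ioc_eq_integral_Ioo,
      ← intervalIntegral.integral_of_le ht0'.le,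
      intervalIntegral.integral_comp_sub_left g t, sub_self, sub_zero,
      intervalIntegral.integral_of_le ht0'.le]
  rw [hsplit]
  simp only [hgdef]
  have hI1 : IntegrableOn (fun τ : ℝ => 2 * V ^ 2 * (x' - x) ^ 2 * τ ^ (-(1/2) : ℝ))
      (Ioc 0 t) :=
    ((intervalIntegral.intervalIntegrable_rpow' (by norm_num : (-1:ℝ) < -(1/2))).1).const_mul _
  have hI2 : IntegrableOn (fun τ : ℝ =>
      7 * min (τ ^ (-(1/2) : ℝ)) ((x' - x) ^ 2 / 8 * τ ^ (-(3/2) : ℝ))) (Ioc 0 t) :=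
    ((min_integrableOn hk0).mono_set Ioc_subset_Ioi_self).const_mul 7
  rw [integral_add hI1 hI2, integral_const_mul, integral_const_mul,
    int_Ioc_rpow_neg_half ht0]
  -- bound the two pieces
  have hVz4 : V * (x' - x) ≤ 4 := by
    have hzle : x' - x ≤ 4 / V := by
      have h1 : x' ≤ 2 / V := hx'2
      have h2 : -(2 / V) ≤ x := hx1
      have : (2:ℝ) / V + 2 / V = 4 / V := by ring
      linarith
    calc V * (x' - x) ≤ V * (4 / V) := mul_le_mul_of_nonneg_left hzle hV.le
      _ = 4 := by field_simp
  have hsqt : Real.sqrt t ≤ 1 / V := by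
    calc Real.sqrt t ≤ Real.sqrt (1 / V ^ 2) := Real.sqrt_le_sqrt htV
      _ = 1 / V := by
          rw [show (1 / V ^ 2 : ℝ) = (1 / V) ^ 2 by ring, Real.sqrt_sq (by positivity)]
  have hpiece1 : 2 * V ^ 2 * (x' - x) ^ 2 * (2 * Real.sqrt t) ≤ 16 * (x' - x) := by
    have h1 : 2 * Real.sqrt t ≤ 2 * (1 / V) := by linarith
    have h2 : 2 * V ^ 2 * (x' - x) ^ 2 * (2 * Real.sqrt t)
        ≤ 2 * V ^ 2 * (x' - x) ^ 2 * (2 * (1 / V)) :=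
      mul_le_mul_of_nonneg_left h1 (by positivity)
    have h3 : 2 * V ^ 2 * (x' - x) ^ 2 * (2 * (1 / V)) = 4 * (V * (x' - x)) * (x' - x) := by
      field_simp; ring
    have h4 : 4 * (V * (x' - x)) * (x' - x) ≤ 16 * (x' - x) := by
      nlinarith [mul_nonneg (by linarith : (0:ℝ) ≤ 4 - V * (x' - x)) hz]
    linarith
  have hpiece2 : (∫ τ in Ioc (0:ℝ) t,
      min (τ ^ (-(1/2) : ℝ)) ((x' - x) ^ 2 / 8 * τ ^ (-(3/2) : ℝ))) ≤ 2 * (x' - x) := by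
    have hmono : (∫ τ in Ioc (0:ℝ) t,
        min (τ ^ (-(1/2) : ℝ)) ((x' - x) ^ 2 / 8 * τ ^ (-(3/2) : ℝ)))
        ≤ ∫ τ in Ioi (0:ℝ),
        min (τ ^ (-(1/2) : ℝ)) ((x' - x) ^ 2 / 8 * τ ^ (-(3/2) : ℝ)) := by
      refine setIntegral_mono_set (min_integrableOn hk0) ?_
        (HasSubset.Subset.eventuallyLE Ioc_subset_Ioi_self)
      refine ae_restrict_of_forall_mem measurableSet_Ioi fun τ hτ => ?_
      exact le_min (Real.rpow_nonneg (le_of_lt hτ) _)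
        (mul_nonneg hk0.le (Real.rpow_nonneg (le_of_lt hτ) _))
    rw [min_integral hk0] at hmono
    have hsk : Real.sqrt ((x' - x) ^ 2 / 8) ≤ (x' - x) / 2 := by
      calc Real.sqrt ((x' - x) ^ 2 / 8) ≤ Real.sqrt (((x' - x) / 2) ^ 2) := by
            refine Real.sqrt_le_sqrt ?_
            nlinarith [sq_nonneg (x' - x)]
        _ = (x' - x) / 2 := Real.sqrt_sq (by linarith)
    linarith
  have hM0' : (0:ℝ) ≤ ∫ τ in Ioc (0:ℝ) t,
      min (τ ^ (-(1/2) : ℝ)) ((x' - x) ^ 2 / 8 * τ ^ (-(3/2) : ℝ)) := by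
    refine setIntegral_nonneg measurableSet_Ioc fun τ hτ => ?_
    exact le_min (Real.rpow_nonneg (le_of_lt hτ.1) _)
      (mul_nonneg hk0.le (Real.rpow_nonneg (le_of_lt hτ.1) _))
  nlinarith [hpiece1, hpiece2]
end

section
/- Let F(x) := (ε/(θv))(e^{−θvx} − 1)·1_{x≤0} with θ ∈ (1/2,1), v, ε > 0, and for m ∈ ℕ let I_m := ∫_{−1}^{0} F(u/m) · 6(1+u)(−v(1+u)/(2m) + 1) · m du (equivalently the rescaled boundary-layer integral ∫_{−1}^0 F(u/m)·3(1+u)(−v(1+u)+2m) du). Then lim_{m→∞} ∫_{−1}^{0} F(u/m)·3(1+u)(−v(1+u)+2m) du = ∫_{−1}^0 ε·6(1+u)(−u) du = ε. -/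
open Filter Topology

set_option maxHeartbeats 1000000 in
private lemma key_slope (b : ℝ) :
    Tendsto (fun m : ℕ => (m : ℝ) * (Real.exp (b / m) - 1)) atTop (𝓝 b) := by
  have hd : HasDerivAt (fun x : ℝ => Real.exp (b * x)) b 0 := by
    have := ((hasDerivAt_id (0 : ℝ)).const_mul b).exp
    simpa using this
  have hs := hasDerivAt_iff_tendsto_slope.mp hd
  have h1 : Tendsto (fun m : ℕ => ((m : ℝ))⁻¹) atTop (𝓝[≠] (0 : ℝ)) := by
    apply tendsto_nhdsWithin_of_tendsto_nhds_of_eventually_within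
    · exact tendsto_inv_atTop_zero.comp tendsto_natCast_atTop_atTop
    · filter_upwards [eventually_ge_atTop 1] with m hm
      have : (0 : ℝ) < (m : ℝ) := by exact_mod_cast hm
      simp [Set.mem_setOf_eq, (inv_pos.mpr this).ne']
  have h2 := hs.comp h1
  apply h2.congr'
  filter_upwards [eventually_ge_atTop 1] with m hm
  have hm0 : ((m : ℝ)) ≠ 0 := by positivity
  simp only [Function.comp_apply, slope_def_field]
  rw [div_eq_iff (by simpa using hm0)]
  field_simp
  simp

set_option maxHeartbeats 1000000 in
theorem stmt_17 (θ v ε : ℝ) (hθ0 : 1/2 < θ) (hθ1 : θ < 1) (hv : 0 < v) (hε : 0 < ε) :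
    let F : ℝ → ℝ := fun x => if x ≤ 0 then ε / (θ * v) * (Real.exp (-(θ * v * x)) - 1) else 0
    Tendsto
      (fun m : ℕ => ∫ u in (-1:ℝ)..0, F (u / m) * (3 * (1 + u) * (-v * (1 + u) + 2 * m)))
      atTop (nhds (∫ u in (-1:ℝ)..0, ε * (6 * (1 + u) * (-u)))) ∧
    (∫ u in (-1:ℝ)..0, ε * (6 * (1 + u) * (-u))) = ε := by
  intro F
  have hθ : 0 < θ := by linarith
  have ha : 0 < θ * v := mul_pos hθ hv
  set c : ℝ := ε / (θ * v) with hc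
  have hFdef : ∀ x, F x = if x ≤ 0 then c * (Real.exp (-(θ * v * x)) - 1) else 0 := fun x => rfl
  constructor
  · -- limit part
    set C : ℝ := 3 * ε * Real.exp (θ * v) * (v + 2) with hC
    apply intervalIntegral.tendsto_integral_filter_of_dominated_convergence
      (bound := fun u => C * (-u))
    · -- measurability
      filter_upwards with n
      have hrw : (fun u : ℝ => F (u / n) * (3 * (1 + u) * (-v * (1 + u) + 2 * (n : ℝ)))) =
          fun u : ℝ => (if u / (n : ℝ) ≤ 0 then c * (Real.exp (-(θ * v * (u / n))) - 1) else 0) *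
            (3 * (1 + u) * (-v * (1 + u) + 2 * (n : ℝ))) := rfl
      rw [hrw]
      apply Measurable.aestronglyMeasurable
      apply Measurable.mul
      · exact Measurable.ite (measurableSet_le (measurable_id.div_const _) measurable_const)
          (by fun_prop) measurable_const
      · fun_prop
    · -- bound
      filter_upwards [eventually_ge_atTop 1] with n hn
      apply Filter.Eventually.of_forall
      intro u hu
      rw [Set.uIoc_of_le (by norm_num : (-1:ℝ) ≤ 0)] at hu
      obtain ⟨hu1, hu2⟩ := hu
      have hn1 : (1 : ℝ) ≤ (n : ℝ) := by exact_mod_cast hn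
      have hn0 : (0 : ℝ) < (n : ℝ) := by linarith
      have hux : u / (n : ℝ) ≤ 0 := div_nonpos_iff.mpr (Or.inr ⟨hu2, hn0.le⟩)
      set t : ℝ := θ * v * (-u) / n with ht
      have hu' : (0:ℝ) ≤ -u := by linarith
      have ht0 : 0 ≤ t := div_nonneg (mul_nonneg ha.le hu') hn0.le
      have ht1 : t ≤ θ * v := by
        rw [ht, div_le_iff₀ hn0]
        nlinarith
      have heq : -(θ * v * (u / n)) = t := by rw [ht]; ring
      have hexp : Real.exp t - 1 ≤ t * Real.exp (θ * v) := by
        have h1 : -t + 1 ≤ Real.exp (-t) := Real.add_one_le_exp (-t)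
        have h2 : Real.exp (-t) * Real.exp t = 1 := by
          rw [← Real.exp_add]; simp
        have h3 : Real.exp t ≤ Real.exp (θ * v) := Real.exp_le_exp.mpr ht1
        nlinarith [Real.exp_pos t, Real.exp_pos (θ * v)]
      have hFval : F (u / n) = c * (Real.exp t - 1) := by
        rw [hFdef, if_pos hux, heq]
      have hFnonneg : 0 ≤ F (u / n) := by
        rw [hFval]
        have : 1 ≤ Real.exp t := by simpa using Real.exp_le_exp.mpr ht0
        have hc0 : 0 ≤ c := by positivity
        nlinarith
      have hFle : F (u / n) ≤ ε * Real.exp (θ * v) * (-u) / n := by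
        rw [hFval]
        have : c * (Real.exp t - 1) ≤ c * (t * Real.exp (θ * v)) :=
          mul_le_mul_of_nonneg_left hexp (by positivity)
        calc c * (Real.exp t - 1) ≤ c * (t * Real.exp (θ * v)) := this
          _ = ε * Real.exp (θ * v) * (-u) / n := by
              rw [hc, ht]; field_simp
      have hRle : |3 * (1 + u) * (-v * (1 + u) + 2 * (n : ℝ))| ≤ 3 * (v + 2 * n) := by
        rw [abs_mul]
        have h1 : |3 * (1 + u)| ≤ 3 := by
          rw [abs_of_nonneg (by linarith)]; linarith
        have h2 : |(-v * (1 + u) + 2 * (n : ℝ))| ≤ v + 2 * n := by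
          rw [abs_le]; constructor <;> nlinarith
        exact mul_le_mul h1 h2 (abs_nonneg _) (by norm_num)
      rw [Real.norm_eq_abs, abs_mul, abs_of_nonneg hFnonneg]
      calc F (u / n) * |3 * (1 + u) * (-v * (1 + u) + 2 * (n : ℝ))|
          ≤ (ε * Real.exp (θ * v) * (-u) / n) * (3 * (v + 2 * n)) :=
            mul_le_mul hFle hRle (abs_nonneg _) (by positivity)
        _ ≤ C * (-u) := by
            rw [hC, div_mul_eq_mul_div, div_le_iff₀ hn0]
            nlinarith [Real.exp_pos (θ * v), mul_nonneg (mul_nonneg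
              (mul_nonneg hε.le (Real.exp_pos (θ * v)).le) (by linarith : (0:ℝ) ≤ -u))
              (mul_nonneg hv.le (by linarith : (0:ℝ) ≤ (n:ℝ) - 1))]
    · -- bound integrable
      exact (Continuous.intervalIntegrable (by continuity) _ _)
    · -- pointwise limit
      apply Filter.Eventually.of_forall
      intro u hu
      rw [Set.uIoc_of_le (by norm_num : (-1:ℝ) ≤ 0)] at hu
      obtain ⟨hu1, hu2⟩ := hu
      set b : ℝ := θ * v * (-u) with hb
      have h0 : Tendsto (fun n : ℕ => Real.exp (b / n) - 1) atTop (𝓝 0) := by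
        have hb0 : Tendsto (fun n : ℕ => b / n) atTop (𝓝 0) :=
          tendsto_const_div_atTop_nhds_zero_nat b
        have := (Real.continuous_exp.tendsto 0).comp hb0
        simpa using this.sub_const 1
      have hmain : Tendsto (fun n : ℕ =>
          c * (Real.exp (b / n) - 1) * (3 * (1 + u) * (-v * (1 + u))) +
          c * ((n : ℝ) * (Real.exp (b / n) - 1)) * (6 * (1 + u))) atTop
          (𝓝 (c * 0 * (3 * (1 + u) * (-v * (1 + u))) + c * b * (6 * (1 + u)))) := by
        exact (((tendsto_const_nhds.mul h0).mul tendsto_const_nhds).add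
          ((tendsto_const_nhds.mul (key_slope b)).mul tendsto_const_nhds))
      have hval : c * 0 * (3 * (1 + u) * (-v * (1 + u))) + c * b * (6 * (1 + u))
          = ε * (6 * (1 + u) * (-u)) := by
        rw [hc, hb]; field_simp; ring
      rw [← hval]
      apply hmain.congr'
      filter_upwards [eventually_ge_atTop 1] with n hn
      have hn1 : (1 : ℝ) ≤ (n : ℝ) := by exact_mod_cast hn
      have hn0 : (0 : ℝ) < (n : ℝ) := by linarith
      have hux : u / (n : ℝ) ≤ 0 := div_nonpos_iff.mpr (Or.inr ⟨hu2, hn0.le⟩)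
      have heq : -(θ * v * (u / n)) = b / n := by rw [hb]; ring
      rw [hFdef, if_pos hux, heq]
      ring
  · -- evaluation of the limit integral
    have hder : ∀ u ∈ Set.uIcc (-1:ℝ) 0,
        HasDerivAt (fun x : ℝ => ε * (-3 * x ^ 2 - 2 * x ^ 3)) (ε * (6 * (1 + u) * (-u))) u := by
      intro u _
      have h1 : HasDerivAt (fun x : ℝ => -3 * x ^ 2 - 2 * x ^ 3) (-6 * u - 6 * u ^ 2) u := by
        have := ((hasDerivAt_pow 2 u).const_mul (-3 : ℝ)).sub
          ((hasDerivAt_pow 3 u).const_mul (2 : ℝ))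
        refine this.congr_deriv ?_
        norm_num; ring
      have := h1.const_mul ε
      refine this.congr_deriv ?_
      ring
    rw [intervalIntegral.integral_eq_sub_of_hasDerivAt hder
      (Continuous.intervalIntegrable (by continuity) _ _)]
    norm_num
end
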